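/- Let k, f0, g0, x0, y0, φ2, φ3, ψ be as in the context, and assume φ3 = 0 (i.e. Q = (x0, y0) has order 3 on the curve y² = x³ + f0x + g0). Then, in k[X]: (ψ·(X − x0) + φ2)² − 4·φ2·(X³ + f0·X + g0) = −4·φ2·(X − x0)³. (Equivalently, the tangent line 4y0·y = ψ·x·w + (φ2 − ψ·x0)·w³ to the fiber S0 : y² = x³ + f0x + g0 at Q intersects S0 with multiplicity 3 at Q and nowhere else.) -/
import Mathlib


open Polynomial

noncomputable section

def phi2 {k : Type*} [Field k] (f0 g0 x0 : k) : k := 4 * (x0 ^ 3 + f0 * x0 + g0)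

def psiC {k : Type*} [Field k] (f0 x0 : k) : k := 2 * (3 * x0 ^ 2 + f0)

def phi3 {k : Type*} [Field k] (f0 g0 x0 : k) : k :=
  3 * x0 * phi2 f0 g0 x0 - (3 * x0 ^ 2 + f0) ^ 2

def phi4 {k : Type*} [Field k] (f0 g0 x0 : k) : k :=
  psiC f0 x0 * phi3 f0 g0 x0 - (phi2 f0 g0 x0) ^ 2

def phi5 {k : Type*} [Field k] (f0 g0 x0 : k) : k :=
  (phi2 f0 g0 x0) ^ 2 * phi4 f0 g0 x0 - (phi3 f0 g0 x0) ^ 3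

def phi6 {k : Type*} [Field k] (f0 g0 x0 : k) : k :=
  phi5 f0 g0 x0 - (phi4 f0 g0 x0) ^ 2

/-- `X_α = α·z'² + z'·w' + x₀·w'²`, with `z' = X 0` and `w' = X 1`. -/
def Xa {k : Type*} [Field k] (x0 α : k) : MvPolynomial (Fin 2) k :=
  MvPolynomial.C α * (MvPolynomial.X 0) ^ 2 + MvPolynomial.X 0 * MvPolynomial.X 1
    + MvPolynomial.C x0 * (MvPolynomial.X 1) ^ 2

/-- `Y_α = y₀·( ((4αφ₂φ₃ − 2φ₄)/φ₂³)·z'³ + ((αψφ₂ + 2φ₃)/φ₂²)·z'²·w' + (ψ/φ₂)·z'·w'² + w'³ )`,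
with `z' = X 0` and `w' = X 1`. -/
def Ya {k : Type*} [Field k] (f0 g0 x0 y0 α : k) : MvPolynomial (Fin 2) k :=
  MvPolynomial.C y0 *
    (MvPolynomial.C ((4 * α * phi2 f0 g0 x0 * phi3 f0 g0 x0 - 2 * phi4 f0 g0 x0)
        / (phi2 f0 g0 x0) ^ 3) * (MvPolynomial.X 0) ^ 3
      + MvPolynomial.C ((α * psiC f0 x0 * phi2 f0 g0 x0 + 2 * phi3 f0 g0 x0)
        / (phi2 f0 g0 x0) ^ 2) * (MvPolynomial.X 0) ^ 2 * MvPolynomial.X 1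
      + MvPolynomial.C (psiC f0 x0 / phi2 f0 g0 x0) * MvPolynomial.X 0 * (MvPolynomial.X 1) ^ 2
      + (MvPolynomial.X 1) ^ 3)

/-- `−Y_α² + X_α³ + f₀·X_α·w'⁴ + g₀·w'⁶`. -/
def limPoly {k : Type*} [Field k] (f0 g0 x0 y0 α : k) : MvPolynomial (Fin 2) k :=
  - (Ya f0 g0 x0 y0 α) ^ 2 + (Xa x0 α) ^ 3
    + MvPolynomial.C f0 * Xa x0 α * (MvPolynomial.X 1) ^ 4
    + MvPolynomial.C g0 * (MvPolynomial.X 1) ^ 6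

/-- **Lemma**: if `Q = (x₀, y₀)` has order 3 on the fiber `y² = x³ + f₀x + g₀` (i.e.
`φ₃ = 0`), then the tangent line to the fiber at `Q` meets it with multiplicity 3 at `Q` and
nowhere else, as expressed by the polynomial identity
`(ψ(X − x₀) + φ₂)² − 4φ₂(X³ + f₀X + g₀) = −4φ₂(X − x₀)³`. -/
theorem stmt14 (k : Type*) [Field k] (hk2 : (2 : k) ≠ 0) (hk3 : (3 : k) ≠ 0)
    (f0 g0 x0 y0 : k) (hy0 : y0 ≠ 0)
    (hQ : y0 ^ 2 = x0 ^ 3 + f0 * x0 + g0)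
    (h3 : phi3 f0 g0 x0 = 0) :
    (C (psiC f0 x0) * (X - C x0) + C (phi2 f0 g0 x0)) ^ 2
        - C 4 * C (phi2 f0 g0 x0) * (X ^ 3 + C f0 * X + C g0)
      = -(C 4 * C (phi2 f0 g0 x0)) * (X - C x0) ^ 3 := by
  have h : (C (phi3 f0 g0 x0) : k[X]) = 0 := by rw [h3, map_zero]
  simp only [phi3, phi2, psiC, map_mul, map_add, map_sub, map_pow, map_ofNat] at h ⊢
  linear_combination ((-4 : k[X]) * X ^ 2 + 8 * C x0 * X - 4 * C x0 ^ 2) * h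

end
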